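/- arXiv:1209.3602 — 4 statements merged into one kernel-verified Lean document; each statement's English description precedes it below -/
import Mathlib

section
/- Let Ω ⊆ ℝ^N be an (ε, r₀)-Reifenberg-flat domain, let x ∈ ∂Ω, and for each r ≤ r₀ let ν_r denote a unit normal vector to the hyperplane P(x,r) provided by the definition of Reifenberg-flatness. Then for every M ≥ 1 and every r ≤ r₀/M one has |⟨ν_r, ν_{Mr}⟩| ≥ 1 − (M+1)ε. -/
open Metric MeasureTheory Set Filter
open scoped ENNReal InnerProductSpace NNReal Topology

noncomputable section

/-- An `(ε, r₀)`-Reifenberg-flat domain in `ℝ^N`: a nonempty open set such that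
(i) at every boundary point and every scale `r ≤ r₀` the boundary is `ε r`-close in
Hausdorff distance to a hyperplane through the point, and (ii) at scale `r₀` the two
connected components of the complement of the `2 ε r₀`-neighborhood of the hyperplane
inside the ball lie in `Ω` and in `Ωᶜ` respectively. -/
def IsReifenbergFlat {N : ℕ} (ε r₀ : ℝ) (Ω : Set (EuclideanSpace ℝ (Fin N))) : Prop :=
  Ω.Nonempty ∧ IsOpen Ω ∧
    (∀ x ∈ frontier Ω, ∀ r : ℝ, 0 < r → r ≤ r₀ →
      ∃ ν : EuclideanSpace ℝ (Fin N), ‖ν‖ = 1 ∧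
        Metric.hausdorffDist (frontier Ω ∩ Metric.ball x r)
          ({y | ⟪ν, y - x⟫_ℝ = 0} ∩ Metric.ball x r) ≤ ε * r) ∧
    (∀ x ∈ frontier Ω,
      ∃ ν : EuclideanSpace ℝ (Fin N), ‖ν‖ = 1 ∧
        Metric.hausdorffDist (frontier Ω ∩ Metric.ball x r₀)
          ({y | ⟪ν, y - x⟫_ℝ = 0} ∩ Metric.ball x r₀) ≤ ε * r₀ ∧
        {y | 2 * ε * r₀ ≤ ⟪ν, y - x⟫_ℝ} ∩ Metric.ball x r₀ ⊆ Ω ∧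
        {y | ⟪ν, y - x⟫_ℝ ≤ -(2 * ε * r₀)} ∩ Metric.ball x r₀ ⊆ Ωᶜ)

/-! The hyperplane through `x` at scale `r` tilts away from the one at scale `M r` by at
most the distance a point of the first can be from the second: a point `y` of the first
hyperplane inside `B(x, r)` lies within `ε r` of `∂Ω ∩ B(x, r) ⊆ ∂Ω ∩ B(x, M r)`, hence
within `ε r + ε M r` of the second hyperplane. So the component `w` of `ν_{Mr}` orthogonal
to `ν_r` satisfies `r ‖w‖ ≤ (M + 1) ε r`, and `‖w‖² = 1 - ⟪ν_r, ν_{Mr}⟫²` gives the bound. -/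

section InnerProductSpace

variable {E : Type*} [NormedAddCommGroup E] [InnerProductSpace ℝ E]

theorem one_sub_abs_inner_le_norm_sub_inner_smul {n₁ n₂ : E} (hn₁ : ‖n₁‖ = 1)
    (hn₂ : ‖n₂‖ = 1) : 1 - |⟪n₁, n₂⟫_ℝ| ≤ ‖n₂ - ⟪n₁, n₂⟫_ℝ • n₁‖ := by
  set c := ⟪n₁, n₂⟫_ℝ
  have hc : |c| ≤ 1 := by simpa [hn₁, hn₂] using abs_real_inner_le_norm n₁ n₂
  have hw : ‖n₂ - c • n₁‖ ^ 2 = 1 - c ^ 2 := by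
    rw [norm_sub_sq_real, real_inner_smul_right, real_inner_comm, norm_smul, hn₁, hn₂,
      Real.norm_eq_abs, mul_one, sq_abs]
    ring
  refine abs_le_of_sq_le_sq' ?_ (norm_nonneg _) |>.2
  nlinarith [sq_abs c, abs_nonneg c]

theorem norm_le_of_forall_mem_abs_inner_le {K : Submodule ℝ E} {w : E} (hw : w ∈ K)
    {r δ : ℝ} (hr : 0 < r) (h : ∀ v ∈ K, ‖v‖ < r → |⟪w, v⟫_ℝ| ≤ δ * r) : ‖w‖ ≤ δ := by
  have hδ : 0 ≤ δ := by
    have := h 0 K.zero_mem (by simpa using hr)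
    simp only [inner_zero_right, abs_zero] at this
    exact nonneg_of_mul_nonneg_left this hr
  refine le_of_forall_lt_imp_le_of_dense fun a ha ↦ ?_
  rcases le_or_gt a 0 with ha0 | ha0
  · exact ha0.trans hδ
  have hw0 : 0 < ‖w‖ := ha0.trans ha
  set v := (a * r / ‖w‖ ^ 2) • w
  have hv : ⟪w, v⟫_ℝ = a * r := by
    rw [real_inner_smul_right, real_inner_self_eq_norm_sq]
    field_simp
  have hvr : ‖v‖ < r := by
    rw [norm_smul, Real.norm_of_nonneg (by positivity), div_mul_eq_mul_div, pow_two,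
      mul_div_mul_right _ _ hw0.ne', div_lt_iff₀ hw0]
    exact mul_lt_mul_of_pos_right ha hr |>.trans_eq (mul_comm _ _)
  have := h v (K.smul_mem _ hw) hvr
  rw [hv, abs_of_pos (by positivity)] at this
  exact le_of_mul_le_mul_right this hr

theorem one_sub_le_abs_inner_of_forall_orthogonal_abs_inner_le {n₁ n₂ : E} (hn₁ : ‖n₁‖ = 1)
    (hn₂ : ‖n₂‖ = 1) {r δ : ℝ} (hr : 0 < r)
    (h : ∀ v, ⟪n₁, v⟫_ℝ = 0 → ‖v‖ < r → |⟪n₂, v⟫_ℝ| ≤ δ * r) :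
    1 - δ ≤ |⟪n₁, n₂⟫_ℝ| := by
  set w := n₂ - ⟪n₁, n₂⟫_ℝ • n₁
  have hinner_w : ∀ v, ⟪n₁, v⟫_ℝ = 0 → ⟪w, v⟫_ℝ = ⟪n₂, v⟫_ℝ := fun v hv ↦ by
    rw [inner_sub_left, real_inner_smul_left, hv, mul_zero, sub_zero]
  have hw : w ∈ (ℝ ∙ n₁)ᗮ := by
    rw [Submodule.mem_orthogonal_singleton_iff_inner_right, inner_sub_right,
      real_inner_smul_right, real_inner_self_eq_norm_sq, hn₁]
    ring
  have hwδ : ‖w‖ ≤ δ := norm_le_of_forall_mem_abs_inner_le hw hr fun v hv hvr ↦ by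
    rw [Submodule.mem_orthogonal_singleton_iff_inner_right] at hv
    rw [hinner_w v hv]
    exact h v hv hvr
  linarith [one_sub_abs_inner_le_norm_sub_inner_smul hn₁ hn₂]

theorem abs_inner_sub_le_infDist {n x y : E} (hn : ‖n‖ ≤ 1) {s : Set E} (hs : s.Nonempty)
    (hsn : ∀ z ∈ s, ⟪n, z - x⟫_ℝ = 0) : |⟪n, y - x⟫_ℝ| ≤ infDist y s := by
  refine (le_infDist hs).2 fun z hz ↦ ?_
  calc |⟪n, y - x⟫_ℝ| = |⟪n, y - z⟫_ℝ| := by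
        rw [← sub_add_sub_cancel y z x, inner_add_right, hsn z hz, add_zero]
    _ ≤ ‖n‖ * ‖y - z‖ := abs_real_inner_le_norm n (y - z)
    _ ≤ dist y z := by
        rw [dist_eq_norm]
        exact mul_le_of_le_one_left (norm_nonneg _) hn

end InnerProductSpace

theorem hausdorffEDist_inter_ball_ne_top {X : Type*} [MetricSpace X] {s t : Set X} {x : X}
    (hs : x ∈ s) (ht : x ∈ t) {r : ℝ} (hr : 0 < r) :
    hausdorffEDist (s ∩ ball x r) (t ∩ ball x r) ≠ ⊤ :=
  hausdorffEDist_ne_top_of_nonempty_of_bounded ⟨x, hs, mem_ball_self hr⟩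
    ⟨x, ht, mem_ball_self hr⟩ (isBounded_ball.subset inter_subset_right)
    (isBounded_ball.subset inter_subset_right)

theorem abs_inner_le_of_hausdorffDist_le {E : Type*} [NormedAddCommGroup E]
    [InnerProductSpace ℝ E] {S : Set E} {x : E} (hx : x ∈ S) {n₁ n₂ : E} (hn₂ : ‖n₂‖ = 1)
    {r R δ₁ δ₂ : ℝ} (hr : 0 < r) (hrR : r ≤ R)
    (h₁ : hausdorffDist (S ∩ ball x r) ({y | ⟪n₁, y - x⟫_ℝ = 0} ∩ ball x r) ≤ δ₁)
    (h₂ : hausdorffDist (S ∩ ball x R) ({y | ⟪n₂, y - x⟫_ℝ = 0} ∩ ball x R) ≤ δ₂)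
    {y : E} (hy : y ∈ {y | ⟪n₁, y - x⟫_ℝ = 0} ∩ ball x r) : |⟪n₂, y - x⟫_ℝ| ≤ δ₁ + δ₂ := by
  have hR : 0 < R := hr.trans_le hrR
  have hx₁ : x ∈ {y | ⟪n₁, y - x⟫_ℝ = 0} := by simp
  have hx₂ : x ∈ {y | ⟪n₂, y - x⟫_ℝ = 0} := by simp
  calc |⟪n₂, y - x⟫_ℝ|
      ≤ infDist y ({y | ⟪n₂, y - x⟫_ℝ = 0} ∩ ball x R) :=
        abs_inner_sub_le_infDist hn₂.le ⟨x, hx₂, mem_ball_self hR⟩ fun _ hz ↦ hz.1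
    _ ≤ infDist y (S ∩ ball x R) + δ₂ :=
        (infDist_le_infDist_add_hausdorffDist (hausdorffEDist_inter_ball_ne_top hx hx₂ hR)).trans
          (by gcongr)
    _ ≤ infDist y (S ∩ ball x r) + δ₂ := by
        gcongr
        exact infDist_le_infDist_of_subset (inter_subset_inter_right _ (ball_subset_ball hrR))
          ⟨x, hx, mem_ball_self hr⟩
    _ ≤ δ₁ + δ₂ := by
        gcongr
        refine (infDist_le_hausdorffDist_of_mem hy ?_).trans (hausdorffDist_comm.trans_le h₁)
        rw [hausdorffEDist_comm]
        exact hausdorffEDist_inter_ball_ne_top hx hx₁ hr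

theorem angle_lemma_general {N : ℕ} {ε r₀ : ℝ}
    {Ω : Set (EuclideanSpace ℝ (Fin N))}
    {x : EuclideanSpace ℝ (Fin N)} (hx : x ∈ frontier Ω)
    (ν : ℝ → EuclideanSpace ℝ (Fin N))
    (hν : ∀ r : ℝ, 0 < r → r ≤ r₀ → ‖ν r‖ = 1 ∧
      Metric.hausdorffDist (frontier Ω ∩ Metric.ball x r)
        ({y | ⟪ν r, y - x⟫_ℝ = 0} ∩ Metric.ball x r) ≤ ε * r)
    (M : ℝ) (hM : 1 ≤ M) (r : ℝ) (hr : 0 < r) (hrM : r ≤ r₀ / M) :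
    1 - (M + 1) * ε ≤ |⟪ν r, ν (M * r)⟫_ℝ| := by
  have hMr : M * r ≤ r₀ := by rw [mul_comm]; exact (le_div_iff₀ (by linarith)).1 hrM
  have hrMr : r ≤ M * r := le_mul_of_one_le_left hr.le hM
  obtain ⟨hν₁, h₁⟩ := hν r hr (hrMr.trans hMr)
  obtain ⟨hν₂, h₂⟩ := hν (M * r) (hr.trans_le hrMr) hMr
  refine one_sub_le_abs_inner_of_forall_orthogonal_abs_inner_le hν₁ hν₂ hr fun v hv hvr ↦ ?_
  have hy : x + v ∈ {y | ⟪ν r, y - x⟫_ℝ = 0} ∩ ball x r := by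
    simpa [hv] using hvr
  have := abs_inner_le_of_hausdorffDist_le hx hν₂ hr hrMr h₁ h₂ hy
  rw [add_sub_cancel_left] at this
  linarith

/-- **Lemma (angle between approximating hyperplanes at different scales).**
If `Ω` is `(ε, r₀)`-Reifenberg-flat, `x ∈ ∂Ω`, and for each scale `0 < r ≤ r₀` the unit
vector `ν r` is a normal of a hyperplane through `x` realizing the Reifenberg condition
at scale `r`, then for every `M ≥ 1` and `0 < r ≤ r₀ / M` one has
`|⟪ν r, ν (M r)⟫| ≥ 1 - (M + 1) ε`. -/
theorem angle_lemma {N : ℕ} {ε r₀ : ℝ} (hε : 0 < ε) (hε2 : ε < 1 / 2) (hr₀ : 0 < r₀)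
    {Ω : Set (EuclideanSpace ℝ (Fin N))} (hΩ : IsReifenbergFlat ε r₀ Ω)
    {x : EuclideanSpace ℝ (Fin N)} (hx : x ∈ frontier Ω)
    (ν : ℝ → EuclideanSpace ℝ (Fin N))
    (hν : ∀ r : ℝ, 0 < r → r ≤ r₀ → ‖ν r‖ = 1 ∧
      Metric.hausdorffDist (frontier Ω ∩ Metric.ball x r)
        ({y | ⟪ν r, y - x⟫_ℝ = 0} ∩ Metric.ball x r) ≤ ε * r)
    (M : ℝ) (hM : 1 ≤ M) (r : ℝ) (hr : 0 < r) (hrM : r ≤ r₀ / M) :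
    1 - (M + 1) * ε ≤ |⟪ν r, ν (M * r)⟫_ℝ| :=
  angle_lemma_general hx ν hν M hM r hr hrM
end
end

section
/- Let Ω ⊆ ℝ^N be an (ε, r₀)-Reifenberg-flat domain. Then for every x ∈ ∂Ω and every r ∈ (0, r₀], one of the connected components of B(x,r) ∩ {y : dist(y, P(x,r)) ≥ 2εr} is contained in Ω and the other is contained in ℝ^N∖Ω, where P(x,r) is the hyperplane provided by condition (i) of the definition of Reifenberg-flatness. -/
open Metric MeasureTheory Set Filter
open scoped ENNReal InnerProductSpace NNReal Topology

noncomputable section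

/-!
At every scale `ρ` the boundary near `x` lies in the slab `|⟪ν, y - x⟫| ≤ ε ρ`, so each of the
two convex caps of `B(x, ρ)` beyond that slab lies entirely in `Ω` or entirely outside it. Call
`ρ` good if the two caps lie on opposite sides. If `s` is good and `r < s ≤ 4 r / 3`, then `r` is
good: were both caps at scale `r` on the same side, one of them would meet the cap at scale `s`
lying on the other side, since `ε < 1 / 2` leaves room for a common point on the bisector of the
two normals. The scale `r₀` is good by hypothesis, so every scale is good by downward induction,
and a good scale gives the separation with the margin `2 ε ρ`.
-/

theorem IsPreconnected.subset_or_subset_compl_of_disjoint_frontier {X : Type*}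
    [TopologicalSpace X] {A Ω : Set X} (hA : IsPreconnected A) (hAΩ : Disjoint A (frontier Ω)) :
    A ⊆ Ω ∨ A ⊆ Ωᶜ := by
  have hcover : A ⊆ interior Ω ∪ interior Ωᶜ := by
    rw [← compl_frontier_eq_union_interior]
    exact hAΩ.subset_compl_right
  have hdisj : Disjoint (interior Ω) (interior Ωᶜ) :=
    disjoint_compl_right.mono interior_subset interior_subset
  exact (hA.subset_or_subset isOpen_interior isOpen_interior hdisj hcover).imp
    (fun h => h.trans interior_subset) (fun h => h.trans interior_subset)

theorem forall_Ioc_of_descend {p : ℝ → Prop} {r₀ c : ℝ} (hc : 1 < c) (h₀ : p r₀)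
    (hstep : ∀ r s, 0 < r → r < s → s ≤ c * r → s ≤ r₀ → p s → p r) :
    ∀ r ∈ Ioc 0 r₀, p r := by
  have key : ∀ n : ℕ, ∀ r, 0 < r → r ≤ r₀ → r₀ ≤ c ^ n * r → p r := by
    intro n
    induction n with
    | zero =>
      intro r _ hrr₀ hr₀r
      rw [pow_zero, one_mul] at hr₀r
      rwa [le_antisymm hrr₀ hr₀r]
    | succ n ih =>
      intro r hr hrr₀ hr₀r
      by_cases hn : r₀ ≤ c ^ n * r
      · exact ih r hr hrr₀ hn
      have hcn : 1 ≤ c ^ n := one_le_pow₀ hc.le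
      have hrlt : r < r₀ := by nlinarith
      have hs : r₀ ≤ c ^ n * min (c * r) r₀ := by
        rcases min_cases (c * r) r₀ with ⟨h, -⟩ | ⟨h, -⟩ <;> rw [h]
        · rwa [← mul_assoc, ← pow_succ]
        · nlinarith
      have hrs : r < min (c * r) r₀ := lt_min (by nlinarith) hrlt
      exact hstep r _ hr hrs (min_le_left _ _) (min_le_right _ _)
        (ih _ (hr.trans hrs) (min_le_right _ _) hs)
  rintro r ⟨hr, hrr₀⟩
  obtain ⟨n, hn⟩ := pow_unbounded_of_one_lt (r₀ / r) hc
  exact key n r hr hrr₀ ((div_lt_iff₀ hr).1 hn).le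

section InnerProductSpace

variable {F : Type*} [NormedAddCommGroup F] [InnerProductSpace ℝ F]

def ballCap (x ν : F) (δ ρ : ℝ) : Set F := {y | δ < ⟪ν, y - x⟫_ℝ} ∩ ball x ρ

def IsApproxNormal (A : Set F) (x ν : F) (δ ρ : ℝ) : Prop :=
  ‖ν‖ = 1 ∧ hausdorffDist (A ∩ ball x ρ) ({y | ⟪ν, y - x⟫_ℝ = 0} ∩ ball x ρ) ≤ δ

/-- Condition (ii) at scale `ρ` with the sharper margin `ε ρ`: this form, unlike the one with
margin `2 ε ρ`, passes from one scale to the next. -/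
def IsSeparatingNormal (Ω : Set F) (x ν : F) (ε ρ : ℝ) : Prop :=
  IsApproxNormal (frontier Ω) x ν (ε * ρ) ρ ∧
    ballCap x ν (ε * ρ) ρ ⊆ Ω ∧ ballCap x (-ν) (ε * ρ) ρ ⊆ Ωᶜ

variable {x ν μ : F} {δ δ' ρ r s ε : ℝ}

theorem convex_ballCap (x ν : F) (δ ρ : ℝ) : Convex ℝ (ballCap x ν δ ρ) := by
  refine Convex.inter ?_ (convex_ball x ρ)
  have : {y | δ < ⟪ν, y - x⟫_ℝ} = {y | δ + ⟪ν, x⟫_ℝ < ⟪ν, y⟫_ℝ} := by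
    ext y
    simp only [mem_ofPred_eq, inner_sub_right, lt_sub_iff_add_lt]
  rw [this]
  exact convex_halfSpace_gt (innerₛₗ ℝ ν).isLinear _

theorem ballCap_mono (hδ : δ' ≤ δ) (hρ : ρ ≤ r) : ballCap x ν δ ρ ⊆ ballCap x ν δ' r :=
  inter_subset_inter (fun _ hy => hδ.trans_lt hy) (ball_subset_ball hρ)

theorem inner_add_smul_sub_self (hν : ‖ν‖ = 1) (x : F) (t : ℝ) : ⟪ν, x + t • ν - x⟫_ℝ = t := by
  rw [add_sub_cancel_left, real_inner_smul_right, real_inner_self_eq_norm_sq, hν, one_pow,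
    mul_one]

theorem add_smul_mem_ballCap (hν : ‖ν‖ = 1) {t : ℝ} (hδt : δ < t) (htρ : |t| < ρ) :
    x + t • ν ∈ ballCap x ν δ ρ := by
  refine ⟨by rwa [mem_ofPred_eq, inner_add_smul_sub_self hν], ?_⟩
  rwa [mem_ball, dist_eq_norm, add_sub_cancel_left, norm_smul, hν, mul_one, Real.norm_eq_abs]

theorem abs_inner_sub_le_infDist_s2 {T : Set F} (hν : ‖ν‖ = 1) (hT : T ⊆ {y | ⟪ν, y - x⟫_ℝ = 0})
    (hTne : T.Nonempty) (z : F) : |⟪ν, z - x⟫_ℝ| ≤ infDist z T := by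
  refine (le_infDist hTne).2 fun p hp => ?_
  calc |⟪ν, z - x⟫_ℝ| = |⟪ν, z - p⟫_ℝ| := by
        rw [← sub_add_sub_cancel z p x, inner_add_right, show ⟪ν, p - x⟫_ℝ = 0 from hT hp,
          add_zero]
    _ ≤ ‖ν‖ * ‖z - p‖ := abs_real_inner_le_norm _ _
    _ = dist z p := by rw [hν, one_mul, dist_eq_norm]

theorem isApproxNormal_neg {A : Set F} :
    IsApproxNormal A x (-ν) δ ρ ↔ IsApproxNormal A x ν δ ρ := by
  simp only [IsApproxNormal, norm_neg, inner_neg_left, neg_eq_zero]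

namespace IsApproxNormal

variable {A : Set F}

theorem abs_inner_sub_le (h : IsApproxNormal A x ν δ ρ) (hx : x ∈ A) (hρ : 0 < ρ) {z : F}
    (hz : z ∈ A ∩ ball x ρ) : |⟪ν, z - x⟫_ℝ| ≤ δ := by
  have hxP : x ∈ {y | ⟪ν, y - x⟫_ℝ = 0} ∩ ball x ρ := ⟨by simp, mem_ball_self hρ⟩
  have hfin := hausdorffEDist_ne_top_of_nonempty_of_bounded (s := A ∩ ball x ρ)
    ⟨x, hx, mem_ball_self hρ⟩ ⟨x, hxP⟩
    (isBounded_ball.subset inter_subset_right) (isBounded_ball.subset inter_subset_right)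
  calc |⟪ν, z - x⟫_ℝ| ≤ infDist z ({y | ⟪ν, y - x⟫_ℝ = 0} ∩ ball x ρ) :=
        abs_inner_sub_le_infDist_s2 h.1 inter_subset_left ⟨x, hxP⟩ z
    _ ≤ _ := infDist_le_hausdorffDist_of_mem hz hfin
    _ ≤ δ := h.2

theorem disjoint_ballCap (h : IsApproxNormal A x ν δ ρ) (hx : x ∈ A) (hρ : 0 < ρ) :
    Disjoint (ballCap x ν δ ρ) A :=
  disjoint_left.2 fun _ hz hzA =>
    (hz.1.trans_le (le_abs_self _)).not_ge (h.abs_inner_sub_le hx hρ ⟨hzA, hz.2⟩)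

theorem ballCap_subset_or_subset_compl {Ω : Set F} (h : IsApproxNormal (frontier Ω) x ν δ ρ)
    (hx : x ∈ frontier Ω) (hρ : 0 < ρ) : ballCap x ν δ ρ ⊆ Ω ∨ ballCap x ν δ ρ ⊆ Ωᶜ :=
  (convex_ballCap x ν δ ρ).isPreconnected.subset_or_subset_compl_of_disjoint_frontier
    (h.disjoint_ballCap hx hρ)

end IsApproxNormal

theorem ballCap_inter_ballCap_nonempty (hν : ‖ν‖ = 1) (hμ : ‖μ‖ = 1) (hνμ : 0 ≤ ⟪ν, μ⟫_ℝ)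
    (hδ : 0 ≤ δ) (hr : 0 < r) (hδr : 2 * δ ^ 2 < r ^ 2) :
    (ballCap x ν δ r ∩ ballCap x μ δ r).Nonempty := by
  obtain ⟨k, hδk, hkr⟩ := exists_between ((Real.lt_sqrt hδ).2 (by linarith : δ ^ 2 < r ^ 2 / 2))
  have hk : 2 * k ^ 2 < r ^ 2 := by linarith [(Real.lt_sqrt (hδ.trans hδk.le)).1 hkr]
  have hμν : ⟪μ, ν⟫_ℝ = ⟪ν, μ⟫_ℝ := real_inner_comm ν μ
  set w := (k / (1 + ⟪ν, μ⟫_ℝ)) • (ν + μ)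
  have hwν : ⟪ν, w⟫_ℝ = k := by
    rw [real_inner_smul_right, inner_add_right, real_inner_self_eq_norm_sq, hν]
    field_simp
  have hwμ : ⟪μ, w⟫_ℝ = k := by
    rw [real_inner_smul_right, inner_add_right, real_inner_self_eq_norm_sq, hμ, hμν]
    field_simp
    ring
  have hw : ‖w‖ ^ 2 < r ^ 2 :=
    calc ‖w‖ ^ 2 = 2 * k ^ 2 / (1 + ⟪ν, μ⟫_ℝ) := by
          rw [norm_smul, mul_pow, norm_add_sq_real, hν, hμ, Real.norm_eq_abs, sq_abs]
          field_simp
          ring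
      _ ≤ 2 * k ^ 2 := div_le_self (by positivity) (by linarith)
      _ < r ^ 2 := hk
  have hwr : x + w ∈ ball x r := by
    rw [mem_ball, dist_eq_norm, add_sub_cancel_left]
    exact lt_of_pow_lt_pow_left₀ 2 hr.le hw
  refine ⟨x + w, ⟨?_, hwr⟩, ?_, hwr⟩ <;> simp only [mem_ofPred_eq, add_sub_cancel_left]
  · rwa [hwν]
  · rwa [hwμ]

theorem ballCap_inter_nonempty_of_union_subset {S : Set F} (hν : ‖ν‖ = 1) (hμ : ‖μ‖ = 1)
    (hδ : 0 ≤ δ) (hr : 0 < r) (hδr : 2 * δ ^ 2 < r ^ 2) (hδ' : δ' ≤ δ) (hrs : r ≤ s)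
    (hS : ballCap x ν δ' r ∪ ballCap x (-ν) δ' r ⊆ S) : (ballCap x μ δ s ∩ S).Nonempty := by
  obtain ⟨σ, hσS, hσ, hσμ⟩ : ∃ σ, ballCap x σ δ' r ⊆ S ∧ ‖σ‖ = 1 ∧ 0 ≤ ⟪σ, μ⟫_ℝ := by
    rcases le_total 0 ⟪ν, μ⟫_ℝ with h | h
    · exact ⟨ν, subset_union_left.trans hS, hν, h⟩
    · exact ⟨-ν, subset_union_right.trans hS, by rwa [norm_neg], by rwa [inner_neg_left,
        neg_nonneg]⟩
  obtain ⟨y, hyσ, hyμ⟩ := ballCap_inter_ballCap_nonempty hσ hμ hσμ hδ hr hδr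
  exact ⟨y, ballCap_mono le_rfl hrs hyμ, hσS (ballCap_mono hδ' le_rfl hyσ)⟩

variable {Ω : Set F}

theorem IsApproxNormal.isSeparatingNormal_of_halfSpaces
    (h : IsApproxNormal (frontier Ω) x ν (ε * ρ) ρ) (hx : x ∈ frontier Ω) (hε : 0 < ε)
    (hε2 : ε < 1 / 2) (hρ : 0 < ρ)
    (hpos : {y | 2 * ε * ρ ≤ ⟪ν, y - x⟫_ℝ} ∩ ball x ρ ⊆ Ω)
    (hneg : {y | ⟪ν, y - x⟫_ℝ ≤ -(2 * ε * ρ)} ∩ ball x ρ ⊆ Ωᶜ) :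
    IsSeparatingNormal Ω x ν ε ρ := by
  have hν' : ‖-ν‖ = 1 := (norm_neg ν).trans h.1
  set t := (1 / 2 + ε) * ρ with ht_def
  have ht : |t| < ρ := by rw [abs_of_pos (by positivity)]; nlinarith
  have htε : ε * ρ < t := by nlinarith
  have ht2ε : 2 * ε * ρ ≤ t := by nlinarith
  have hp := add_smul_mem_ballCap (x := x) h.1 htε ht
  have hm := add_smul_mem_ballCap (x := x) hν' htε ht
  refine ⟨h, ?_, ?_⟩
  · refine (h.ballCap_subset_or_subset_compl hx hρ).resolve_right fun hc => hc hp (hpos ⟨?_, hp.2⟩)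
    rwa [mem_ofPred_eq, inner_add_smul_sub_self h.1]
  · refine ((isApproxNormal_neg.2 h).ballCap_subset_or_subset_compl hx hρ).resolve_left
      fun hc => hneg ⟨?_, hm.2⟩ (hc hm)
    rw [mem_ofPred_eq, ← neg_neg ν, inner_neg_left, neg_neg,
      inner_add_smul_sub_self hν']
    linarith

theorem IsApproxNormal.exists_isSeparatingNormal (hν : IsApproxNormal (frontier Ω) x ν (ε * r) r)
    (hμ : IsSeparatingNormal Ω x μ ε s) (hx : x ∈ frontier Ω) (hε : 0 ≤ ε) (hr : 0 < r)
    (hrs : r ≤ s) (hsr : 2 * (ε * s) ^ 2 < r ^ 2) : ∃ ν', IsSeparatingNormal Ω x ν' ε r := by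
  obtain ⟨⟨hμ1, -⟩, hμΩ, hμΩc⟩ := hμ
  have meets {S : Set F} (hS : ballCap x ν (ε * r) r ∪ ballCap x (-ν) (ε * r) r ⊆ S) (μ' : F)
      (hμ' : ‖μ'‖ = 1) : (ballCap x μ' (ε * s) s ∩ S).Nonempty :=
    ballCap_inter_nonempty_of_union_subset hν.1 hμ' (mul_nonneg hε (hr.le.trans hrs)) hr hsr
      (mul_le_mul_of_nonneg_left hrs hε) hrs hS
  rcases hν.ballCap_subset_or_subset_compl hx hr with hp | hp <;>
    rcases (isApproxNormal_neg.2 hν).ballCap_subset_or_subset_compl hx hr with hm | hm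
  · obtain ⟨y, hy, hyΩ⟩ := meets (union_subset hp hm) (-μ) (by rwa [norm_neg])
    exact (hμΩc hy hyΩ).elim
  · exact ⟨ν, hν, hp, hm⟩
  · exact ⟨-ν, isApproxNormal_neg.2 hν, hm, by rwa [neg_neg]⟩
  · obtain ⟨y, hy, hyΩc⟩ := meets (union_subset hp hm) μ hμ1
    exact (hyΩc (hμΩ hy)).elim

theorem IsSeparatingNormal.halfSpaces_subset (h : IsSeparatingNormal Ω x ν ε ρ) (hε : 0 < ε)
    (hρ : 0 < ρ) :
    {y | 2 * ε * ρ ≤ ⟪ν, y - x⟫_ℝ} ∩ ball x ρ ⊆ Ω ∧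
      {y | ⟪ν, y - x⟫_ℝ ≤ -(2 * ε * ρ)} ∩ ball x ρ ⊆ Ωᶜ := by
  have hlt : ε * ρ < 2 * ε * ρ := by nlinarith [mul_pos hε hρ]
  refine ⟨fun y hy => h.2.1 ⟨?_, hy.2⟩, fun y hy => h.2.2 ⟨?_, hy.2⟩⟩
  · exact hlt.trans_le hy.1
  · have : ⟪ν, y - x⟫_ℝ ≤ -(2 * ε * ρ) := hy.1
    rw [mem_ofPred_eq, inner_neg_left]
    linarith

end InnerProductSpace

theorem separation_at_all_scales_general {N : ℕ} {ε r₀ : ℝ}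
    (hε : 0 < ε) (hε2 : ε < 1 / 2)
    {Ω : Set (EuclideanSpace ℝ (Fin N))} (hΩ : IsReifenbergFlat ε r₀ Ω) :
    ∀ x ∈ frontier Ω, ∀ r : ℝ, 0 < r → r ≤ r₀ →
      ∃ ν : EuclideanSpace ℝ (Fin N), ‖ν‖ = 1 ∧
        Metric.hausdorffDist (frontier Ω ∩ Metric.ball x r)
          ({y | ⟪ν, y - x⟫_ℝ = 0} ∩ Metric.ball x r) ≤ ε * r ∧
        {y | 2 * ε * r ≤ ⟪ν, y - x⟫_ℝ} ∩ Metric.ball x r ⊆ Ω ∧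
        {y | ⟪ν, y - x⟫_ℝ ≤ -(2 * ε * r)} ∩ Metric.ball x r ⊆ Ωᶜ := by
  obtain ⟨-, -, hflat, hsep⟩ := hΩ
  intro x hx r hr hrr₀
  have hbase : ∃ ν, IsSeparatingNormal Ω x ν ε r₀ := by
    obtain ⟨ν, hν, hH, hpos, hneg⟩ := hsep x hx
    exact ⟨ν, IsApproxNormal.isSeparatingNormal_of_halfSpaces ⟨hν, hH⟩ hx hε hε2
      (hr.trans_le hrr₀) hpos hneg⟩
  have hdescend : ∀ ρ s, 0 < ρ → ρ < s → s ≤ 4 / 3 * ρ → s ≤ r₀ →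
      (∃ μ, IsSeparatingNormal Ω x μ ε s) → ∃ ν, IsSeparatingNormal Ω x ν ε ρ := by
    rintro ρ s hρ hρs hsρ hsr₀ ⟨μ, hμ⟩
    obtain ⟨ν, hν⟩ := hflat x hx ρ hρ (hρs.le.trans hsr₀)
    have hεs : ε * s < 2 / 3 * ρ := by nlinarith
    exact IsApproxNormal.exists_isSeparatingNormal hν hμ hx hε.le hρ hρs.le
      (by nlinarith [mul_pos hε (hρ.trans hρs)])
  obtain ⟨ν, hν⟩ := forall_Ioc_of_descend (by norm_num) hbase hdescend r ⟨hr, hrr₀⟩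
  exact ⟨ν, hν.1.1, hν.1.2, hν.halfSpaces_subset hε hr⟩

/-- **Lemma (separation property at all scales).**
If `Ω` is `(ε, r₀)`-Reifenberg-flat, then for every `x ∈ ∂Ω` and every `r ∈ (0, r₀]`,
there is a hyperplane through `x` realizing the Reifenberg condition (i) at scale `r`
such that, of the two connected components of
`B(x,r) ∩ {y : dist(y, P(x,r)) ≥ 2 ε r}`, one is contained in `Ω` and the other in `Ωᶜ`. -/
theorem separation_at_all_scales {N : ℕ} {ε r₀ : ℝ}
    (hε : 0 < ε) (hε2 : ε < 1 / 2) (hr₀ : 0 < r₀)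
    {Ω : Set (EuclideanSpace ℝ (Fin N))} (hΩ : IsReifenbergFlat ε r₀ Ω) :
    ∀ x ∈ frontier Ω, ∀ r : ℝ, 0 < r → r ≤ r₀ →
      ∃ ν : EuclideanSpace ℝ (Fin N), ‖ν‖ = 1 ∧
        Metric.hausdorffDist (frontier Ω ∩ Metric.ball x r)
          ({y | ⟪ν, y - x⟫_ℝ = 0} ∩ Metric.ball x r) ≤ ε * r ∧
        {y | 2 * ε * r ≤ ⟪ν, y - x⟫_ℝ} ∩ Metric.ball x r ⊆ Ω ∧
        {y | ⟪ν, y - x⟫_ℝ ≤ -(2 * ε * r)} ∩ Metric.ball x r ⊆ Ωᶜ :=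
  separation_at_all_scales_general hε hε2 hΩ
end
end

section
/- If Ω ⊆ ℝ^N is an (ε, r₀)-Reifenberg-flat domain for some r₀ > 0 and some ε with 0 < ε < 1/2, then rad(Ω) ≥ r₀/4; that is, Ω contains an open ball of radius r₀/4. -/
open Metric MeasureTheory Set Filter
open scoped ENNReal InnerProductSpace NNReal Topology

noncomputable section

/-- The outer radius `Rad(Ω) = inf_{x ∈ Ω} sup_{y ∈ Ω} d(x,y)` (extended-real valued). -/
def outerRad {N : ℕ} (Ω : Set (EuclideanSpace ℝ (Fin N))) : ℝ≥0∞ :=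
  ⨅ x ∈ Ω, ⨆ y ∈ Ω, edist x y

/-- The inner radius `rad(Ω) = sup_{x ∈ Ω} sup {r > 0 : B(x,r) ⊆ Ω}` (extended-real valued). -/
def innerRad {N : ℕ} (Ω : Set (EuclideanSpace ℝ (Fin N))) : ℝ≥0∞ :=
  ⨆ x ∈ Ω, sSup {r : ℝ≥0∞ | 0 < r ∧ EMetric.ball x r ⊆ Ω}


/-!
Take a boundary point `x` and the unit normal `ν` of the flatness condition at scale `r₀`.
The Hausdorff bound confines `∂Ω ∩ B(x, r₀)` to the slab `|⟪ν, · - x⟫| ≤ ε r₀`, so the convex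
part of `B(x, r₀)` above the slab contains no boundary point; it meets `Ω` at the bottom
`x + 2 ε r₀ ν` of the cap, hence lies in `Ω`. As `ε < 1/2`, it contains the ball of radius
`r₀ / 4` about `x + (3 r₀ / 4) ν`. If `∂Ω` is empty, then `Ω` is the whole space.
-/

theorem IsPreconnected.subset_of_disjoint_frontier {X : Type*} [TopologicalSpace X]
    {s u : Set X} (hs : IsPreconnected s) (hu : IsOpen u) (hsu : (s ∩ u).Nonempty)
    (hfr : Disjoint s (frontier u)) : s ⊆ u :=
  hs.subset_of_closure_inter_subset hu hsu fun z ⟨hzu, hzs⟩ => by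
    by_contra hz
    exact hfr.ne_of_mem hzs (hu.frontier_eq ▸ ⟨hzu, hz⟩) rfl

section InnerProductSpace

variable {E : Type*} [NormedAddCommGroup E] [InnerProductSpace ℝ E] {x ν : E}

theorem abs_inner_sub_le_infDist_s6 (hν : ‖ν‖ = 1) {P : Set E} (hP : P ⊆ {y | ⟪ν, y - x⟫_ℝ = 0})
    (hne : P.Nonempty) (w : E) : |⟪ν, w - x⟫_ℝ| ≤ infDist w P :=
  (le_infDist hne).2 fun q hq =>
    calc |⟪ν, w - x⟫_ℝ| = |⟪ν, w - q⟫_ℝ| := by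
          rw [← sub_add_sub_cancel w q x, inner_add_right, hP hq, add_zero]
      _ ≤ ‖ν‖ * ‖w - q‖ := abs_real_inner_le_norm _ _
      _ = dist w q := by rw [hν, one_mul, dist_eq_norm]

theorem abs_inner_sub_le_of_hausdorffDist_le (hν : ‖ν‖ = 1) {F : Set E} {r δ : ℝ} (hr : 0 < r)
    (hH : hausdorffDist (F ∩ ball x r) ({y | ⟪ν, y - x⟫_ℝ = 0} ∩ ball x r) ≤ δ)
    {w : E} (hw : w ∈ F ∩ ball x r) : |⟪ν, w - x⟫_ℝ| ≤ δ := by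
  have hx : x ∈ {y | ⟪ν, y - x⟫_ℝ = 0} ∩ ball x r := ⟨by simp, mem_ball_self hr⟩
  have hfin := hausdorffEDist_ne_top_of_nonempty_of_bounded ⟨w, hw⟩ ⟨x, hx⟩
    (isBounded_ball.subset inter_subset_right) (isBounded_ball.subset inter_subset_right)
  calc |⟪ν, w - x⟫_ℝ| ≤ infDist w ({y | ⟪ν, y - x⟫_ℝ = 0} ∩ ball x r) :=
        abs_inner_sub_le_infDist_s6 hν inter_subset_left ⟨x, hx⟩ w
    _ ≤ δ := (infDist_le_hausdorffDist_of_mem hw hfin).trans hH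

theorem convex_halfSpace_inner_sub_gt (c : ℝ) : Convex ℝ {y : E | c < ⟪ν, y - x⟫_ℝ} := by
  have h : {y : E | c < ⟪ν, y - x⟫_ℝ} = {y | c + ⟪ν, x⟫_ℝ < ⟪ν, y⟫_ℝ} := by
    ext y; simp only [mem_ofPred_eq, inner_sub_right, lt_sub_iff_add_lt]
  exact h ▸ convex_halfSpace_gt (innerₛₗ ℝ ν).isLinear _

theorem ball_add_smul_subset (hν : ‖ν‖ = 1) {s r : ℝ} (hs : 0 ≤ s) :
    ball (x + s • ν) r ⊆ {y | s - r < ⟪ν, y - x⟫_ℝ} ∩ ball x (s + r) := by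
  intro y hy
  rw [mem_ball, dist_eq_norm] at hy
  have hyx : y - x = (y - (x + s • ν)) + s • ν := by abel
  have hinner : -‖y - (x + s • ν)‖ ≤ ⟪ν, y - (x + s • ν)⟫_ℝ := by
    simpa [hν] using neg_le_of_abs_le (abs_real_inner_le_norm ν (y - (x + s • ν)))
  refine ⟨?_, ?_⟩
  · rw [mem_ofPred_eq, hyx, inner_add_right, real_inner_smul_right, real_inner_self_eq_norm_sq, hν]
    linarith
  · rw [mem_ball, dist_eq_norm, hyx]
    calc ‖y - (x + s • ν) + s • ν‖ ≤ ‖y - (x + s • ν)‖ + ‖s • ν‖ := norm_add_le _ _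
      _ < r + s := by rw [norm_smul, hν, mul_one, Real.norm_of_nonneg hs]; linarith
      _ = s + r := add_comm r s

theorem halfBall_subset_of_cap_subset {Ω : Set E} (hΩ : IsOpen Ω) (hν : ‖ν‖ = 1) {ε r : ℝ}
    (hε : 0 < ε) (hε2 : ε < 1 / 2) (hr : 0 < r)
    (hH : hausdorffDist (frontier Ω ∩ ball x r) ({y | ⟪ν, y - x⟫_ℝ = 0} ∩ ball x r) ≤ ε * r)
    (hcap : {y | 2 * ε * r ≤ ⟪ν, y - x⟫_ℝ} ∩ ball x r ⊆ Ω) :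
    {y | ε * r < ⟪ν, y - x⟫_ℝ} ∩ ball x r ⊆ Ω := by
  have hpν : ⟪ν, x + (2 * ε * r) • ν - x⟫_ℝ = 2 * ε * r := by
    rw [add_sub_cancel_left, real_inner_smul_right, real_inner_self_eq_norm_sq, hν]; ring
  have hp : x + (2 * ε * r) • ν ∈ {y | 2 * ε * r ≤ ⟪ν, y - x⟫_ℝ} ∩ ball x r := by
    refine ⟨hpν.ge, ?_⟩
    rw [mem_ball, dist_eq_norm, add_sub_cancel_left, norm_smul, hν, mul_one,
      Real.norm_of_nonneg (by positivity)]
    nlinarith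
  refine ((convex_halfSpace_inner_sub_gt _).inter (convex_ball x r)).isPreconnected
    |>.subset_of_disjoint_frontier hΩ ⟨_, ?_, hcap hp⟩ ?_
  · refine ⟨?_, hp.2⟩
    change ε * r < ⟪ν, x + (2 * ε * r) • ν - x⟫_ℝ
    rw [hpν]; nlinarith
  · refine Set.disjoint_left.2 fun w ⟨hw, hwr⟩ hwfr => ?_
    exact hw.not_ge <| (le_abs_self _).trans <|
      abs_inner_sub_le_of_hausdorffDist_le hν hr hH ⟨hwfr, hwr⟩

end InnerProductSpace

theorem ofReal_le_innerRad_of_ball_subset {N : ℕ} {Ω : Set (EuclideanSpace ℝ (Fin N))}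
    {x : EuclideanSpace ℝ (Fin N)} {r : ℝ} (hr : 0 < r) (h : ball x r ⊆ Ω) :
    ENNReal.ofReal r ≤ innerRad Ω := by
  unfold innerRad
  exact le_iSup₂_of_le x (h (mem_ball_self hr))
    (le_sSup ⟨ENNReal.ofReal_pos.2 hr, eball_ofReal.le.trans h⟩)

/-- **Lemma (Reifenberg-flat domains contain a ball of radius `r₀ / 4`).**
If `Ω` is an `(ε, r₀)`-Reifenberg-flat domain with `0 < ε < 1/2` and `r₀ > 0`, then
`rad(Ω) ≥ r₀ / 4`; indeed `Ω` contains an open ball of radius `r₀ / 4`. -/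
theorem innerRad_ge_of_reifenberg {N : ℕ} {ε r₀ : ℝ}
    (hε : 0 < ε) (hε2 : ε < 1 / 2) (hr₀ : 0 < r₀)
    {Ω : Set (EuclideanSpace ℝ (Fin N))} (hΩ : IsReifenbergFlat ε r₀ Ω) :
    ENNReal.ofReal (r₀ / 4) ≤ innerRad Ω ∧
    ∃ x : EuclideanSpace ℝ (Fin N), Metric.ball x (r₀ / 4) ⊆ Ω := by
  obtain ⟨hne, hopen, -, hflat⟩ := hΩ
  suffices h : ∃ z, ball z (r₀ / 4) ⊆ Ω by
    obtain ⟨z, hz⟩ := h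
    exact ⟨ofReal_le_innerRad_of_ball_subset (by positivity) hz, z, hz⟩
  rcases (frontier Ω).eq_empty_or_nonempty with hfr | ⟨x, hx⟩
  · obtain ⟨z, hz⟩ := hne
    rw [(isClopen_iff_frontier_eq_empty.2 hfr).eq_univ ⟨z, hz⟩]
    exact ⟨z, subset_univ _⟩
  obtain ⟨ν, hν, hH, hcap, -⟩ := hflat x hx
  have hhalf := halfBall_subset_of_cap_subset hopen hν hε hε2 hr₀ hH hcap
  refine ⟨x + (3 * r₀ / 4) • ν, (ball_add_smul_subset hν (by positivity)).trans <|
    Subset.trans (inter_subset_inter (fun y hy => ?_) (ball_subset_ball (by linarith))) hhalf⟩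
  exact (show ε * r₀ ≤ 3 * r₀ / 4 - r₀ / 4 by nlinarith).trans_lt hy
end
end

section
/- Let X and Y be two (ε, r₀)-Reifenberg-flat domains in ℝ^N satisfying d_H(ℝ^N∖X, ℝ^N∖Y) ≤ 4r₀. Then d_H(ℝ^N∖X, ℝ^N∖Y) ≤ (8/(1−2ε)) · (|X △ Y|/ω_N)^{1/N}, where |X △ Y| is the Lebesgue measure of the symmetric difference of X and Y and ω_N is the Lebesgue measure of the unit ball in ℝ^N. -/
open Metric MeasureTheory Set Filter
open scoped ENNReal InnerProductSpace NNReal Topology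

noncomputable section

/-! If `d_H(Xᶜ, Yᶜ) > r`, some point of one complement, say `x ∉ X`, has `B(x, r) ⊆ Y`, and it
suffices to find a ball of radius `(1 - 2ε) r / 8` in `B(x, r) ∖ X ⊆ Y ∖ X`; comparing volumes
then gives `ω_N ((1 - 2ε) r / 8)^N ≤ |X △ Y|`.

Either `B(x, (1 - 2ε) r / 8)` misses `∂X`, and being connected it lies outside `X`, or it contains
a boundary point `z`. In the latter case we use that at every scale `s ≤ r₀` some *lower cap*
`{y ∈ B(z, s) : ⟪ν, y - z⟫ < -ε s}` lies outside `X`. A cap does not meet `∂X` by flatness (i),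
so it lies outside `X` as soon as one of its points does. Condition (ii) gives a cap outside `X`
at scale `r₀`, and this descends through the scales with ratio `9/10`: after orienting the new
normal to make an acute angle with the old one, the two caps share a point on the bisector of the
normals. -/

theorem IsPreconnected.subset_compl_of_disjoint_frontier {α : Type*} [TopologicalSpace α]
    {s X : Set α} (hs : IsPreconnected s) (hfr : Disjoint s (frontier X))
    (hsX : (s \ X).Nonempty) : s ⊆ Xᶜ := by
  have hcover : s ⊆ interior X ∪ interior Xᶜ := by
    intro p hp
    rw [interior_compl]
    by_cases hpX : p ∈ closure X
    · exact Or.inl (by_contra fun hpi => hfr.notMem_of_mem_left hp ⟨hpX, hpi⟩)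
    · exact Or.inr hpX
  have hdisj : Disjoint (interior X) (interior Xᶜ) := by
    rw [interior_compl]
    exact disjoint_compl_right.mono_left interior_subset_closure
  obtain ⟨p, hps, hpX⟩ := hsX
  have hp : p ∈ interior Xᶜ := (hcover hps).resolve_left fun h => hpX (interior_subset h)
  exact (hs.subset_right_of_subset_union isOpen_interior isOpen_interior hdisj hcover
    ⟨p, hps, hp⟩).trans interior_subset

theorem exists_ball_disjoint_of_lt_hausdorffEDist {α : Type*} [PseudoMetricSpace α]
    {s t : Set α} {r : ℝ} (h : ENNReal.ofReal r < hausdorffEDist s t) :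
    (∃ x ∈ s, Disjoint (ball x r) t) ∨ (∃ x ∈ t, Disjoint (ball x r) s) := by
  have hinf : ∀ {x : α} {u : Set α}, ¬Disjoint (ball x r) u → infEDist x u ≤ ENNReal.ofReal r := by
    intro x u hxu
    obtain ⟨y, hyx, hyu⟩ := not_disjoint_iff.1 hxu
    exact (infEDist_le_edist_of_mem hyu).trans (edist_lt_ofReal.2 (mem_ball'.1 hyx)).le
  by_contra! H
  exact h.not_ge (hausdorffEDist_le_of_infEDist (fun x hx => hinf (H.1 x hx))
    fun x hx => hinf (H.2 x hx))

theorem ofReal_le_rpow_of_ball_subset {E : Type*} [NormedAddCommGroup E] [NormedSpace ℝ E]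
    [MeasurableSpace E] [BorelSpace E] [FiniteDimensional ℝ E] [Nontrivial E] (μ : Measure E)
    [μ.IsAddHaarMeasure] {s : Set E} {c : E} {ρ : ℝ} (h : ball c ρ ⊆ s) :
    ENNReal.ofReal ρ ≤ (μ s / μ (ball 0 1)) ^ (1 / (Module.finrank ℝ E : ℝ)) := by
  rcases le_or_gt ρ 0 with hρ | hρ
  · simp [ENNReal.ofReal_of_nonpos hρ]
  have hdim : (0 : ℝ) < Module.finrank ℝ E := by exact_mod_cast Module.finrank_pos
  rw [one_div, ENNReal.le_rpow_inv_iff hdim, ENNReal.le_div_iff_mul_le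
    (Or.inl (measure_ball_pos μ 0 one_pos).ne') (Or.inl measure_ball_lt_top.ne)]
  calc ENNReal.ofReal ρ ^ (Module.finrank ℝ E : ℝ) * μ (ball 0 1) = μ (ball c ρ) := by
        rw [Measure.addHaar_ball_of_pos μ c hρ, ENNReal.rpow_natCast, ENNReal.ofReal_pow hρ.le]
    _ ≤ μ s := measure_mono h

section Caps

variable {E : Type*} [NormedAddCommGroup E] [InnerProductSpace ℝ E]

def lowerCap (ν z : E) (h s : ℝ) : Set E := {y | ⟪ν, y - z⟫_ℝ < -h} ∩ ball z s

def HasExteriorCap (ε : ℝ) (X : Set E) (z : E) (s : ℝ) : Prop :=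
  ∃ ν : E, ‖ν‖ = 1 ∧ lowerCap ν z (ε * s) s ⊆ Xᶜ

variable {ν z : E} {h s : ℝ}

theorem convex_lowerCap : Convex ℝ (lowerCap ν z h s) := by
  refine Convex.inter ?_ (convex_ball z s)
  simp only [inner_sub_right, sub_lt_iff_lt_add']
  exact convex_halfSpace_lt (innerₛₗ ℝ ν).isLinear _

theorem notMem_of_hausdorffDist_inter_ball_le {A : Set E} {y : E} (hν : ‖ν‖ = 1) (hz : z ∈ A)
    (hA : hausdorffDist (A ∩ ball z s) ({y | ⟪ν, y - z⟫_ℝ = 0} ∩ ball z s) ≤ h)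
    (hy : y ∈ ball z s) (hfar : h < |⟪ν, y - z⟫_ℝ|) : y ∉ A := by
  intro hyA
  have hs : 0 < s := pos_of_mem_ball hy
  have hfin : hausdorffEDist (A ∩ ball z s) ({y | ⟪ν, y - z⟫_ℝ = 0} ∩ ball z s) ≠ ⊤ :=
    hausdorffEDist_ne_top_of_nonempty_of_bounded ⟨z, hz, mem_ball_self hs⟩
      ⟨z, mem_inter (by simp) (mem_ball_self hs)⟩ (isBounded_ball.subset inter_subset_right)
      (isBounded_ball.subset inter_subset_right)
  obtain ⟨p, ⟨hp, -⟩, hyp⟩ :=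
    exists_dist_lt_of_hausdorffDist_lt (mem_inter hyA hy) (hA.trans_lt hfar) hfin
  have hp : ⟪ν, y - p⟫_ℝ = ⟪ν, y - z⟫_ℝ := by
    rw [← sub_sub_sub_cancel_right y p z, inner_sub_right, show ⟪ν, p - z⟫_ℝ = 0 from hp, sub_zero]
  have := abs_real_inner_le_norm ν (y - p)
  rw [hp, hν, one_mul, ← dist_eq_norm] at this
  linarith

theorem lowerCap_subset_compl {X : Set E} {y₀ : E} (hν : ‖ν‖ = 1) (hz : z ∈ frontier X)
    (hX : hausdorffDist (frontier X ∩ ball z s) ({y | ⟪ν, y - z⟫_ℝ = 0} ∩ ball z s) ≤ h)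
    (hy₀ : y₀ ∈ lowerCap ν z h s) (hy₀X : y₀ ∉ X) : lowerCap ν z h s ⊆ Xᶜ := by
  refine convex_lowerCap.isPreconnected.subset_compl_of_disjoint_frontier ?_ ⟨y₀, hy₀, hy₀X⟩
  refine Set.disjoint_left.2 fun y hy => notMem_of_hausdorffDist_inter_ball_le hν hz hX hy.2 ?_
  exact (lt_neg.1 hy.1).trans_le (neg_le_abs _)

theorem sub_smul_mem_lowerCap {u : E} {t : ℝ} (hu : ‖u‖ = 1) (ht : 0 ≤ t) (hts : t < s)
    (hh : h < t * ⟪ν, u⟫_ℝ) : z - t • u ∈ lowerCap ν z h s := by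
  refine ⟨?_, ?_⟩
  · rw [Set.mem_ofPred_eq, sub_sub_cancel_left, inner_neg_right, real_inner_smul_right]
    linarith
  · rwa [mem_ball, dist_eq_norm, sub_sub_cancel_left, norm_neg, norm_smul, hu, mul_one,
      Real.norm_of_nonneg ht]

theorem ball_subset_lowerCap {a ρ : ℝ} (hν : ‖ν‖ = 1) (ha : 0 ≤ a) (has : a + ρ ≤ s)
    (hha : ρ + h ≤ a) :
    ball (z - a • ν) ρ ⊆ lowerCap ν z h s := by
  intro u hu
  have hcz : ‖(z - a • ν) - z‖ = |a| := by
    rw [sub_sub_cancel_left, norm_neg, norm_smul, hν, mul_one, Real.norm_eq_abs]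
  have hu' : ‖u - (z - a • ν)‖ < ρ := mem_ball_iff_norm.1 hu
  refine ⟨?_, ?_⟩
  · have hinner : ⟪ν, u - z⟫_ℝ = ⟪ν, u - (z - a • ν)⟫_ℝ - a := by
      rw [show u - z = (u - (z - a • ν)) - a • ν by abel, inner_sub_right, real_inner_smul_right,
        real_inner_self_eq_norm_sq, hν]
      ring
    have := real_inner_le_norm ν (u - (z - a • ν))
    rw [hν, one_mul] at this
    rw [Set.mem_ofPred_eq, hinner]
    linarith
  · rw [mem_ball, dist_eq_norm]
    calc ‖u - z‖ ≤ ‖u - (z - a • ν)‖ + ‖(z - a • ν) - z‖ := norm_sub_le_norm_sub_add_norm_sub _ _ _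
      _ < s := by rw [hcz, abs_of_nonneg ha]; linarith

theorem exists_unit_bisector {a b : E} (ha : ‖a‖ = 1) (hb : ‖b‖ = 1) (hab : 0 ≤ ⟪a, b⟫_ℝ) :
    ∃ u : E, ‖u‖ = 1 ∧ ⟪a, u⟫_ℝ = ⟪b, u⟫_ℝ ∧ 0 < ⟪a, u⟫_ℝ ∧ 1 ≤ 2 * ⟪a, u⟫_ℝ ^ 2 := by
  have hw : ‖a + b‖ ^ 2 = 2 * (1 + ⟪a, b⟫_ℝ) := by
    rw [norm_add_sq_real, ha, hb]; ring
  have hwpos : 0 < ‖a + b‖ :=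
    (norm_nonneg _).lt_of_ne fun h0 => by rw [← h0] at hw; linarith
  have hau : ⟪a, ‖a + b‖⁻¹ • (a + b)⟫_ℝ = ‖a + b‖⁻¹ * (1 + ⟪a, b⟫_ℝ) := by
    rw [real_inner_smul_right, inner_add_right, real_inner_self_eq_norm_sq, ha, one_pow]
  have hbu : ⟪b, ‖a + b‖⁻¹ • (a + b)⟫_ℝ = ‖a + b‖⁻¹ * (1 + ⟪a, b⟫_ℝ) := by
    rw [real_inner_smul_right, inner_add_right, real_inner_self_eq_norm_sq, hb, one_pow,
      real_inner_comm]
    ring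
  refine ⟨‖a + b‖⁻¹ • (a + b), ?_, by rw [hau, hbu], by rw [hau]; positivity, ?_⟩
  · rw [norm_smul, norm_inv, norm_norm, inv_mul_cancel₀ hwpos.ne']
  · rw [hau, mul_pow, inv_pow, hw]
    field_simp
    linarith

end Caps

namespace IsReifenbergFlat

variable {N : ℕ} {ε r₀ : ℝ} {X : Set (EuclideanSpace ℝ (Fin N))} {z : EuclideanSpace ℝ (Fin N)}

theorem hasExteriorCap_r₀ (hX : IsReifenbergFlat ε r₀ X) (hε : 0 ≤ ε) (hε2 : ε < 1 / 2)
    (hr₀ : 0 < r₀) (hz : z ∈ frontier X) : HasExteriorCap ε X z r₀ := by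
  obtain ⟨ν, hν, hH, -, hbelow⟩ := hX.2.2.2 z hz
  have hνν : ⟪ν, ν⟫_ℝ = 1 := by rw [real_inner_self_eq_norm_sq, hν, one_pow]
  have hmem : ∀ {h : ℝ}, h < (1 / 2 + ε) * r₀ → z - ((1 / 2 + ε) * r₀) • ν ∈ lowerCap ν z h r₀ :=
    fun hh => sub_smul_mem_lowerCap hν (by positivity) (by nlinarith) (by rwa [hνν, mul_one])
  have hout : z - ((1 / 2 + ε) * r₀) • ν ∉ X := by
    have hy := hmem (h := 2 * ε * r₀) (by nlinarith)
    exact hbelow ⟨le_of_lt (Set.mem_ofPred_eq ▸ hy.1), hy.2⟩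
  exact ⟨ν, hν, lowerCap_subset_compl hν hz hH (hmem (by nlinarith)) hout⟩

theorem hasExteriorCap_of_le (hX : IsReifenbergFlat ε r₀ X) (hε : 0 ≤ ε) (hε2 : ε < 1 / 2)
    (hz : z ∈ frontier X) {s S : ℝ} (hs : 0 < s) (hsS : s ≤ S) (hSs : 9 * S ≤ 10 * s)
    (hSr₀ : S ≤ r₀) (hS : HasExteriorCap ε X z S) : HasExteriorCap ε X z s := by
  obtain ⟨νS, hνS, hcapS⟩ := hS
  -- flatness at scale `s` determines the normal only up to sign
  obtain ⟨ν, hν, hacute, hH⟩ : ∃ ν : EuclideanSpace ℝ (Fin N), ‖ν‖ = 1 ∧ 0 ≤ ⟪νS, ν⟫_ℝ ∧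
      hausdorffDist (frontier X ∩ ball z s) ({y | ⟪ν, y - z⟫_ℝ = 0} ∩ ball z s) ≤ ε * s := by
    obtain ⟨ν, hν, hH⟩ := hX.2.2.1 z hz s hs (hsS.trans hSr₀)
    rcases le_total 0 ⟪νS, ν⟫_ℝ with hsgn | hsgn
    · exact ⟨ν, hν, hsgn, hH⟩
    · refine ⟨-ν, by rwa [norm_neg], by rwa [inner_neg_right, neg_nonneg], ?_⟩
      simpa only [inner_neg_left, neg_eq_zero] using hH
  obtain ⟨u, hu, hνu, hk, hk2⟩ := exists_unit_bisector hνS hν hacute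
  -- `⟪νS, u⟫ ≥ 1 / √2 > 7 / 10`, while `ε S < 5 s / 9`
  have hkey : ε * S < 9 / 10 * s * ⟪νS, u⟫_ℝ := by
    have hk7 : 7 / 10 < ⟪νS, u⟫_ℝ := by nlinarith
    have hεS : ε * S < 5 / 9 * s := by nlinarith
    nlinarith
  have hyS : z - (9 / 10 * s) • u ∈ lowerCap νS z (ε * S) S :=
    sub_smul_mem_lowerCap hu (by positivity) (by linarith) hkey
  have hy : z - (9 / 10 * s) • u ∈ lowerCap ν z (ε * s) s :=
    sub_smul_mem_lowerCap hu (by positivity) (by linarith) (by rw [← hνu]; nlinarith)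
  exact ⟨ν, hν, lowerCap_subset_compl hν hz hH hy (hcapS hyS)⟩

theorem hasExteriorCap (hX : IsReifenbergFlat ε r₀ X) (hε : 0 ≤ ε) (hε2 : ε < 1 / 2)
    (hz : z ∈ frontier X) {s : ℝ} (hs : 0 < s) (hsr₀ : s ≤ r₀) : HasExteriorCap ε X z s := by
  have hr₀ : 0 < r₀ := hs.trans_le hsr₀
  suffices H : ∀ n : ℕ, ∀ s, 0 < s → r₀ * (9 / 10) ^ n ≤ s → s ≤ r₀ → HasExteriorCap ε X z s by
    obtain ⟨n, hn⟩ := exists_pow_lt_of_lt_one (div_pos hs hr₀) (by norm_num : (9 / 10 : ℝ) < 1)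
    rw [lt_div_iff₀ hr₀, mul_comm] at hn
    exact H n s hs hn.le hsr₀
  intro n
  induction n with
  | zero =>
    intro s _ hlow hup
    obtain rfl : s = r₀ := le_antisymm hup (by simpa using hlow)
    exact hX.hasExteriorCap_r₀ hε hε2 hr₀ hz
  | succ n ih =>
    intro s hs hlow hup
    have hpow : r₀ * (9 / 10) ^ n ≤ r₀ :=
      mul_le_of_le_one_right hr₀.le (pow_le_one₀ (by norm_num) (by norm_num))
    refine hX.hasExteriorCap_of_le (S := min (10 / 9 * s) r₀) hε hε2 hz hs
      (le_min (by linarith) hup) (by linarith [min_le_left (10 / 9 * s) r₀]) (min_le_right _ _)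
      (ih _ (by positivity) (le_min ?_ hpow) (min_le_right _ _))
    rw [pow_succ] at hlow
    linarith

theorem exists_ball_subset_ball_inter_compl (hX : IsReifenbergFlat ε r₀ X) (hε : 0 ≤ ε)
    (hε2 : ε < 1 / 2) {x : EuclideanSpace ℝ (Fin N)} (hx : x ∉ X) {r : ℝ} (hr : 0 < r)
    (hr4 : r ≤ 4 * r₀) : ∃ c, ball c ((1 - 2 * ε) * r / 8) ⊆ ball x r ∩ Xᶜ := by
  by_cases hfr : Disjoint (ball x ((1 - 2 * ε) * r / 8)) (frontier X)
  · refine ⟨x, subset_inter (ball_subset_ball (by nlinarith)) ?_⟩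
    exact (convex_ball x _).isPreconnected.subset_compl_of_disjoint_frontier hfr
      ⟨x, mem_ball_self (by nlinarith), hx⟩
  obtain ⟨z, hzx, hz⟩ := not_disjoint_iff.1 hfr
  obtain ⟨ν, hν, hcap⟩ := hX.hasExteriorCap hε hε2 hz (s := r / 4) (by positivity) (by linarith)
  refine ⟨z - ((1 + ε) * (r / 4) / 2) • ν, fun u hu => ?_⟩
  have hu' := ball_subset_lowerCap (s := r / 4) (h := ε * (r / 4)) hν (by positivity)
    (by nlinarith) (by nlinarith) hu
  refine ⟨ball_subset_ball' ?_ hu'.2, hcap hu'⟩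
  have := mem_ball.1 hzx
  nlinarith

theorem exists_ball_subset_symmDiff (hX : IsReifenbergFlat ε r₀ X)
    {Y : Set (EuclideanSpace ℝ (Fin N))} (hY : IsReifenbergFlat ε r₀ Y) (hε : 0 ≤ ε)
    (hε2 : ε < 1 / 2) {r : ℝ} (hr : 0 < r) (hr4 : r ≤ 4 * r₀)
    (hrD : ENNReal.ofReal r < hausdorffEDist Xᶜ Yᶜ) :
    ∃ c, ball c ((1 - 2 * ε) * r / 8) ⊆ (X \ Y) ∪ (Y \ X) := by
  rcases exists_ball_disjoint_of_lt_hausdorffEDist hrD with ⟨x, hx, hdisj⟩ | ⟨x, hx, hdisj⟩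
  · obtain ⟨c, hc⟩ := hX.exists_ball_subset_ball_inter_compl hε hε2 hx hr hr4
    exact ⟨c, fun u hu => Or.inr ⟨disjoint_compl_right_iff_subset.1 hdisj (hc hu).1, (hc hu).2⟩⟩
  · obtain ⟨c, hc⟩ := hY.exists_ball_subset_ball_inter_compl hε hε2 hx hr hr4
    exact ⟨c, fun u hu => Or.inl ⟨disjoint_compl_right_iff_subset.1 hdisj (hc hu).1, (hc hu).2⟩⟩

end IsReifenbergFlat

theorem hausdorff_compl_controlled_by_symmDiff_general {N : ℕ} {ε r₀ : ℝ}
    (hε : 0 < ε) (hε2 : ε < 1 / 2)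
    {X Y : Set (EuclideanSpace ℝ (Fin N))}
    (hX : IsReifenbergFlat ε r₀ X) (hY : IsReifenbergFlat ε r₀ Y)
    (hclose : EMetric.hausdorffEdist Xᶜ Yᶜ ≤ ENNReal.ofReal (4 * r₀)) :
    EMetric.hausdorffEdist Xᶜ Yᶜ ≤
      ENNReal.ofReal (8 / (1 - 2 * ε)) *
        (volume ((X \ Y) ∪ (Y \ X)) /
            volume (Metric.ball (0 : EuclideanSpace ℝ (Fin N)) 1)) ^ (1 / (N : ℝ)) := by
  rcases Nat.eq_zero_or_pos N with rfl | hN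
  · -- `ℝ⁰` is a single point, so both domains are the whole space
    rw [hX.1.eq_univ, hY.1.eq_univ]
    exact hausdorffEDist_self.trans_le zero_le
  have : Nonempty (Fin N) := ⟨⟨0, hN⟩⟩
  have h2ε : 0 < 1 - 2 * ε := by linarith
  refine ENNReal.le_of_forall_pos_nnreal_lt fun r hr hrD => ?_
  rw [← ENNReal.ofReal_coe_nnreal] at hrD
  have hr4 : (r : ℝ) ≤ 4 * r₀ :=
    ((ENNReal.ofReal_le_ofReal_iff').1 (hrD.le.trans hclose)).resolve_right (not_le.2 hr)
  obtain ⟨c, hc⟩ := hX.exists_ball_subset_symmDiff hY hε.le hε2 hr hr4 hrD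
  have hvol := ofReal_le_rpow_of_ball_subset volume hc
  rw [finrank_euclideanSpace_fin] at hvol
  calc (r : ℝ≥0∞) = ENNReal.ofReal (8 / (1 - 2 * ε)) * ENNReal.ofReal ((1 - 2 * ε) * r / 8) := by
        rw [← ENNReal.ofReal_mul (by positivity), ← ENNReal.ofReal_coe_nnreal]
        field_simp
    _ ≤ _ := mul_le_mul_right hvol _

/-- **Lemma (the Hausdorff distance between complements is controlled by the measure of
the symmetric difference).** Let `X`, `Y` be `(ε, r₀)`-Reifenberg-flat domains of `ℝ^N`
with `d_H(Xᶜ, Yᶜ) ≤ 4 r₀`. Then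
`d_H(Xᶜ, Yᶜ) ≤ (8 / (1 - 2ε)) * (|X △ Y| / ω_N)^{1/N}`. -/
theorem hausdorff_compl_controlled_by_symmDiff {N : ℕ} {ε r₀ : ℝ}
    (hε : 0 < ε) (hε2 : ε < 1 / 2) (hr₀ : 0 < r₀)
    {X Y : Set (EuclideanSpace ℝ (Fin N))}
    (hX : IsReifenbergFlat ε r₀ X) (hY : IsReifenbergFlat ε r₀ Y)
    (hclose : EMetric.hausdorffEdist Xᶜ Yᶜ ≤ ENNReal.ofReal (4 * r₀)) :
    EMetric.hausdorffEdist Xᶜ Yᶜ ≤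
      ENNReal.ofReal (8 / (1 - 2 * ε)) *
        (volume ((X \ Y) ∪ (Y \ X)) /
            volume (Metric.ball (0 : EuclideanSpace ℝ (Fin N)) 1)) ^ (1 / (N : ℝ)) :=
  hausdorff_compl_controlled_by_symmDiff_general hε hε2 hX hY hclose
end
end
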